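/- Let P be a submonoid of a group G. For neutral words α and β in P (even-length tuples with alternating product equal to e), the concatenation αβ is neutral and K(αβ) = K(α) ∩ K(β), where K is the constructible ideal associated to a word. -/

import Mathlib

/-!
`Q(αβ)` consists of the partial products of the letters of `αβ` read backwards: those that stop
inside `β` form `Q(β)`, and those that reach into `α` are `ȧ(β)⁻¹ = e` times an element of `Q(α)`.
Hence `Q(αβ) = Q(α) ∪ Q(β)`, and `K` turns unions of quotient sets into intersections.
-/

/-- The alternating product `p₁⁻¹p₂⋯p_{2k-1}⁻¹p_{2k}` of a word, given as a list of
pairs `[(p₁,p₂),…,(p_{2k-1},p_{2k})]`. -/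
def wordProd {G : Type*} [Group G] (w : List (G × G)) : G :=
  (w.map fun x => x.1⁻¹ * x.2).prod

/-- The iterated quotient set `Q(α) = {e, p_{2k}⁻¹p_{2k-1}, p_{2k}⁻¹p_{2k-1}p_{2k-2}⁻¹p_{2k-3}, …}`. -/
def quotSet {G : Type*} [Group G] (w : List (G × G)) : Set G :=
  Set.range fun j : ℕ => ((w.reverse.take j).map fun x => x.2⁻¹ * x.1).prod

/-- The constructible set `K(α) = ⋂_{g ∈ Q(α)} (gP ∩ P)`, as a subset of `G`. -/
def KSet {G : Type*} [Group G] (P : Submonoid G) (w : List (G × G)) : Set G :=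
  {x : G | x ∈ P ∧ ∀ g ∈ quotSet w, ∃ p ∈ P, x = g * p}

open Set

theorem List.range_prod_take_append {M : Type*} [Monoid M] {L₁ L₂ : List M} (h : L₁.prod = 1) :
    (Set.range fun j => ((L₁ ++ L₂).take j).prod) =
      (Set.range fun j => (L₁.take j).prod) ∪ Set.range fun j => (L₂.take j).prod := by
  ext g
  simp only [Set.mem_union, Set.mem_range]
  constructor
  · rintro ⟨j, rfl⟩
    rcases le_or_gt j L₁.length with hj | hj
    · exact .inl ⟨j, by rw [List.take_append_of_le_length hj]⟩
    · refine .inr ⟨j - L₁.length, ?_⟩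
      rw [List.take_append, List.take_of_length_le hj.le, List.prod_append, h, one_mul]
  · rintro (⟨j, rfl⟩ | ⟨j, rfl⟩)
    · refine ⟨min j L₁.length, ?_⟩
      rw [List.take_append_of_le_length (min_le_right _ _), ← List.take_eq_take_min]
    · refine ⟨L₁.length + j, ?_⟩
      rw [List.take_append, List.take_of_length_le (by omega), List.prod_append, h, one_mul,
        Nat.add_sub_cancel_left]

section Words

variable {G : Type*} [Group G]

theorem wordProd_append (w₁ w₂ : List (G × G)) :
    wordProd (w₁ ++ w₂) = wordProd w₁ * wordProd w₂ := by
  simp [wordProd]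

theorem prod_map_reverse_eq_inv_wordProd (w : List (G × G)) :
    (w.reverse.map fun x => x.2⁻¹ * x.1).prod = (wordProd w)⁻¹ := by
  simp [wordProd, List.prod_inv_reverse, List.map_reverse, Function.comp_def]

theorem quotSet_eq_range_prod_take (w : List (G × G)) :
    quotSet w = range fun j => ((w.reverse.map fun x => x.2⁻¹ * x.1).take j).prod := by
  simp [quotSet, List.map_take]

theorem quotSet_append (w₁ : List (G × G)) {w₂ : List (G × G)} (h₂ : wordProd w₂ = 1) :
    quotSet (w₁ ++ w₂) = quotSet w₁ ∪ quotSet w₂ := by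
  have h₂' : (w₂.reverse.map fun x => x.2⁻¹ * x.1).prod = 1 := by
    rw [prod_map_reverse_eq_inv_wordProd, h₂, inv_one]
  rw [quotSet_eq_range_prod_take, List.reverse_append, List.map_append,
    List.range_prod_take_append h₂', union_comm, ← quotSet_eq_range_prod_take,
    ← quotSet_eq_range_prod_take]

theorem KSet_of_quotSet_eq_union (P : Submonoid G) {w w₁ w₂ : List (G × G)}
    (h : quotSet w = quotSet w₁ ∪ quotSet w₂) :
    KSet P w = KSet P w₁ ∩ KSet P w₂ := by
  ext x
  simp only [KSet, h, mem_union, mem_ofPred_eq, mem_inter_iff]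
  constructor
  · rintro ⟨hx, hK⟩
    exact ⟨⟨hx, fun g hg => hK g (.inl hg)⟩, ⟨hx, fun g hg => hK g (.inr hg)⟩⟩
  · rintro ⟨⟨hx, hK₁⟩, -, hK₂⟩
    exact ⟨hx, fun g hg => hg.elim (hK₁ g) (hK₂ g)⟩

end Words

theorem stmt_7_general {G : Type*} [Group G] (P : Submonoid G) (w₁ w₂ : List (G × G))
    (h₁ : wordProd w₁ = 1) (h₂ : wordProd w₂ = 1) :
    wordProd (w₁ ++ w₂) = 1 ∧ KSet P (w₁ ++ w₂) = KSet P w₁ ∩ KSet P w₂ :=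
  ⟨by rw [wordProd_append, h₁, h₂, one_mul], KSet_of_quotSet_eq_union P (quotSet_append w₁ h₂)⟩

theorem stmt_7 {G : Type*} [Group G] (P : Submonoid G) (w₁ w₂ : List (G × G))
    (hw₁ : ∀ x ∈ w₁, x.1 ∈ P ∧ x.2 ∈ P) (hw₂ : ∀ x ∈ w₂, x.1 ∈ P ∧ x.2 ∈ P)
    (h₁ : wordProd w₁ = 1) (h₂ : wordProd w₂ = 1) :
    wordProd (w₁ ++ w₂) = 1 ∧ KSet P (w₁ ++ w₂) = KSet P w₁ ∩ KSet P w₂ :=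
  stmt_7_general P w₁ w₂ h₁ h₂
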